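/- There is no invertible row and column finite matrix V conjugating S_{-1} to S_{-2} and S_1 to S_2 simultaneously; in particular the Jacobson embedding Φ of the Toeplitz–Jacobson algebra (x ↦ S_{-1}, y ↦ S_1) and the embedding Ξ (x ↦ S_{-2}, y ↦ S_2) are not conjugate by an invertible element of B(K). -/
import Mathlib


open Classical

/-- A matrix is row finite if every row has finitely many nonzero entries. -/
def rowFin {K : Type*} [Field K] (A : ℕ → ℕ → K) : Prop := ∀ i, {j | A i j ≠ 0}.Finite

/-- A matrix is column finite if every column has finitely many nonzero entries. -/
def colFin {K : Type*} [Field K] (A : ℕ → ℕ → K) : Prop := ∀ j, {i | A i j ≠ 0}.Finite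

/-- `A ∈ B(K)`: row and column finite. -/
def RCF {K : Type*} [Field K] (A : ℕ → ℕ → K) : Prop := rowFin A ∧ colFin A

/-- `A ∈ M_∞(K)`: finitely many nonzero entries in total. -/
def MInf {K : Type*} [Field K] (A : ℕ → ℕ → K) : Prop :=
  {p : ℕ × ℕ | A p.1 p.2 ≠ 0}.Finite

/-- Matrix multiplication (the sum is finite for row/column finite matrices). -/
noncomputable def matMul {K : Type*} [Field K] (A B : ℕ → ℕ → K) : ℕ → ℕ → K :=
  fun i j => ∑ᶠ k, A i k * B k j

/-- The identity matrix. -/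
def idm {K : Type*} [Field K] : ℕ → ℕ → K := fun i j => if i = j then 1 else 0

/-- The `j`-th column of `A` as a finitely supported vector (junk value `0` if the
column is not finitely supported). -/
noncomputable def col {K : Type*} [Field K] (A : ℕ → ℕ → K) (j : ℕ) : ℕ →₀ K :=
  if h : (Function.support fun i => A i j).Finite then Finsupp.ofSupportFinite _ h else 0

/-- The linear transformation `L_A : V → V`, `x ↦ A x`, on the space `V = ℕ →₀ K`
of finitely supported sequences. -/
noncomputable def LA {K : Type*} [Field K] (A : ℕ → ℕ → K) : (ℕ →₀ K) →ₗ[K] (ℕ →₀ K) :=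
  Finsupp.linearCombination K (col A)

/-- `A` is (algebraically) Fredholm: invertible modulo `M_∞(K)`. -/
def Fredholm {K : Type*} [Field K] (A : ℕ → ℕ → K) : Prop :=
  ∃ A₀ : ℕ → ℕ → K, RCF A₀ ∧ MInf (matMul A A₀ - idm) ∧ MInf (matMul A₀ A - idm)

/-- The Fredholm index `dim ker L_A − dim coker L_A`. -/
noncomputable def indx {K : Type*} [Field K] (A : ℕ → ℕ → K) : ℤ :=
  (Module.finrank K (LinearMap.ker (LA A)) : ℤ)
    - (Module.finrank K ((ℕ →₀ K) ⧸ LinearMap.range (LA A)) : ℤ)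

/-- Forward shift matrix `S_i` (ones on the `i`-th subdiagonal). -/
def Sp {K : Type*} [Field K] (i : ℕ) : ℕ → ℕ → K := fun m n => if m = n + i then 1 else 0

/-- Backward shift matrix `S_{-i}` (ones on the `i`-th superdiagonal). -/
def Sm {K : Type*} [Field K] (i : ℕ) : ℕ → ℕ → K := fun m n => if n = m + i then 1 else 0

section Aux

variable {K : Type*} [Field K]

lemma col_apply {A : ℕ → ℕ → K} (hA : colFin A) (j i : ℕ) : col A j i = A i j := by
  have h : (Function.support fun i => A i j).Finite := hA j
  simp only [col, dif_pos h]
  rfl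

lemma LA_apply {A : ℕ → ℕ → K} (hA : colFin A) (v : ℕ →₀ K) (i : ℕ) :
    LA A v i = ∑ j ∈ v.support, v j * A i j := by
  simp only [LA, Finsupp.linearCombination_apply, Finsupp.sum, Finsupp.finset_sum_apply,
    Finsupp.smul_apply, smul_eq_mul]
  exact Finset.sum_congr rfl fun j _ => by rw [col_apply hA]

lemma matMul_entry {A B : ℕ → ℕ → K} (hB : colFin B) (i j : ℕ) :
    matMul A B i j = ∑ k ∈ (col B j).support, A i k * B k j := by
  refine finsum_eq_finset_sum_of_support_subset _ fun k hk => ?_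
  have hBk : B k j ≠ 0 := by
    intro h
    simp [Function.mem_support, h] at hk
  simpa [Finsupp.mem_support_iff, col_apply hB] using hBk

lemma colFin_matMul {A B : ℕ → ℕ → K} (hA : colFin A) (hB : colFin B) :
    colFin (matMul A B) := by
  intro j
  have hsub : {i | matMul A B i j ≠ 0} ⊆
      ⋃ k ∈ (col B j).support, {i | A i k ≠ 0} := by
    intro i hi
    rw [Set.mem_setOf_eq, matMul_entry hB] at hi
    obtain ⟨k, hk, hne⟩ := Finset.exists_ne_zero_of_sum_ne_zero hi
    exact Set.mem_biUnion hk (fun h => hne (by rw [h, zero_mul]))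
  exact Set.Finite.subset (Set.Finite.biUnion (Finset.finite_toSet _) fun k _ => hA k) hsub

lemma LA_single {A : ℕ → ℕ → K} (j : ℕ) (c : K) :
    LA A (Finsupp.single j c) = c • col A j :=
  Finsupp.linearCombination_single _ _ _

lemma LA_matMul {A B : ℕ → ℕ → K} (hA : colFin A) (hB : colFin B) :
    LA (matMul A B) = (LA A).comp (LA B) := by
  apply Finsupp.lhom_ext
  intro j c
  rw [LA_single, LinearMap.comp_apply, LA_single, map_smul]
  congr 1
  ext i
  rw [col_apply (colFin_matMul hA hB), matMul_entry hB, LA_apply hA]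
  exact Finset.sum_congr rfl fun k _ => by rw [col_apply hB, mul_comm]

lemma colFin_idm : colFin (idm : ℕ → ℕ → K) := by
  intro j
  refine Set.Finite.subset (Set.finite_singleton j) ?_
  intro m hm
  simp only [idm, Set.mem_setOf_eq, ne_eq, ite_eq_right_iff, not_forall] at hm
  obtain ⟨h, -⟩ := hm
  exact Set.mem_singleton_iff.mpr h

lemma LA_idm : LA (idm : ℕ → ℕ → K) = LinearMap.id := by
  apply Finsupp.lhom_ext
  intro j c
  have hcol : col (idm : ℕ → ℕ → K) j = Finsupp.single j 1 := by
    ext i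
    rw [col_apply colFin_idm, Finsupp.single_apply]
    simp [idm, eq_comm]
  rw [LA_single, LinearMap.id_apply, hcol, Finsupp.smul_single, smul_eq_mul, mul_one]

lemma colFin_Sm (n : ℕ) : colFin (Sm n : ℕ → ℕ → K) := by
  intro j
  refine Set.Finite.subset (Set.finite_singleton (j - n)) ?_
  intro m hm
  simp only [Sm, Set.mem_setOf_eq, ne_eq, ite_eq_right_iff, not_forall] at hm
  obtain ⟨h, -⟩ := hm
  exact Set.mem_singleton_iff.mpr (by omega)

lemma LA_Sm_apply (n : ℕ) (v : ℕ →₀ K) (m : ℕ) : LA (Sm n) v m = v (m + n) := by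
  rw [LA_apply (colFin_Sm n)]
  simp only [Sm, mul_ite, mul_one, mul_zero]
  rw [Finset.sum_ite_eq' v.support (m + n) (fun j => v j)]
  by_cases h : m + n ∈ v.support
  · rw [if_pos h]
  · rw [if_neg h, eq_comm]
    exact Finsupp.notMem_support_iff.mp h

end Aux


theorem stmt19 {K : Type*} [Field K] :
    ¬ ∃ U U' : ℕ → ℕ → K, RCF U ∧ RCF U' ∧
        matMul U U' = idm ∧ matMul U' U = idm ∧
        matMul (matMul U' (Sm 1)) U = Sm 2 ∧
        matMul (matMul U' (Sp 1)) U = Sp 2 := by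
  rintro ⟨U, U', ⟨-, hUc⟩, ⟨-, hU'c⟩, hUU', hU'U, hSm, -⟩
  have hT'T : ∀ x : ℕ →₀ K, LA U' (LA U x) = x := by
    intro x
    have h := congrArg LA hU'U
    rw [LA_matMul hU'c hUc, LA_idm] at h
    exact LinearMap.congr_fun h x
  have hTT' : ∀ x : ℕ →₀ K, LA U (LA U' x) = x := by
    intro x
    have h := congrArg LA hUU'
    rw [LA_matMul hUc hU'c, LA_idm] at h
    exact LinearMap.congr_fun h x
  have hconj : ∀ x : ℕ →₀ K, LA U' (LA (Sm 1) (LA U x)) = LA (Sm 2) x := by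
    intro x
    have h := congrArg LA hSm
    rw [LA_matMul (colFin_matMul hU'c (colFin_Sm 1)) hUc,
        LA_matMul hU'c (colFin_Sm 1)] at h
    exact LinearMap.congr_fun h x
  have hker1 : ∀ x : ℕ →₀ K, LA (Sm 2) x = 0 → LA (Sm 1) (LA U x) = 0 := by
    intro x hx
    have h1 : LA U' (LA (Sm 1) (LA U x)) = 0 := by rw [hconj x, hx]
    have h2 := congrArg (LA U) h1
    rw [hTT'] at h2
    simpa using h2
  have hSm2zero : ∀ j : ℕ, j < 2 → LA (Sm 2) (Finsupp.single j (1 : K)) = 0 := by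
    intro j hj
    ext m
    rw [LA_Sm_apply, Finsupp.single_apply, Finsupp.coe_zero, Pi.zero_apply, if_neg]
    omega
  have hk1 : ∀ v : ℕ →₀ K, LA (Sm 1) v = 0 → ∀ n, 0 < n → v n = 0 := by
    intro v hv n hn
    have h := congrArg (fun w : ℕ →₀ K => w (n - 1)) hv
    simp only [LA_Sm_apply, Finsupp.coe_zero, Pi.zero_apply] at h
    rwa [Nat.sub_add_cancel hn] at h
  set f0 := LA U (Finsupp.single 0 (1 : K)) with hf0def
  set f1 := LA U (Finsupp.single 1 (1 : K)) with hf1def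
  have h0 : ∀ n, 0 < n → f0 n = 0 := hk1 _ (hker1 _ (hSm2zero 0 (by norm_num)))
  have h1 : ∀ n, 0 < n → f1 n = 0 := hk1 _ (hker1 _ (hSm2zero 1 (by norm_num)))
  set a := f0 0 with hadef
  set b := f1 0 with hbdef
  have hw : LA U (b • Finsupp.single 0 (1 : K) - a • Finsupp.single 1 (1 : K)) = 0 := by
    rw [map_sub, map_smul, map_smul, ← hf0def, ← hf1def]
    ext n
    rcases Nat.eq_zero_or_pos n with rfl | hn
    · simp only [Finsupp.sub_apply, Finsupp.smul_apply, smul_eq_mul, ← hadef, ← hbdef,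
        Finsupp.coe_zero, Pi.zero_apply]
      ring
    · simp [Finsupp.sub_apply, Finsupp.smul_apply, h0 n hn, h1 n hn]
  have hw0 : b • Finsupp.single 0 (1 : K) - a • Finsupp.single 1 (1 : K) = 0 := by
    have h := congrArg (LA U') hw
    rw [hT'T] at h
    simpa using h
  have hb : b = 0 := by
    have h := congrArg (fun w : ℕ →₀ K => w 0) hw0
    simpa using h
  have ha : a = 0 := by
    have h := congrArg (fun w : ℕ →₀ K => w 1) hw0
    simpa using h
  have hf0 : f0 = 0 := by
    ext n
    rcases Nat.eq_zero_or_pos n with rfl | hn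
    · simpa [← hadef] using ha
    · simp [h0 n hn]
  have hcon : (Finsupp.single 0 (1 : K)) = 0 := by
    have h := hT'T (Finsupp.single 0 (1 : K))
    rw [← hf0def, hf0, map_zero] at h
    exact h.symm
  simpa using congrArg (fun w : ℕ →₀ K => w 0) hcon
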